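/- Let $h > 0$, let $a : (-\infty, t_{\max}) \to \mathbb{R}_{>0}$ be continuous with $(a(t) - e^{ht})/e^{ht} \to 0$ as $t \to -\infty$, and fix $t_\mathrm{L} \in (-\infty, t_{\max})$. Define conformal time $\eta(t) = -\int_t^{t_\mathrm{L}} \frac{d\tilde t}{a(\tilde t)}$. Then $a(t)\eta(t) \to -1/h$ as $t \to -\infty$. -/

import Mathlib

open Real Filter intervalIntegral

/-!
From `a(t) ~ e^{ht}` we get `1/a(t) ~ e^{-ht}` as `t → -∞`. Since `∫_t^{t_L} e^{-hs} ds`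
diverges, integrating preserves this equivalence: the part of the integral where the two integrands
are not yet close is a constant, negligible against the divergent total. Hence
`∫_t^{t_L} ds/a(s) ~ ∫_t^{t_L} e^{-hs} ds ~ e^{-ht}/h`, and multiplying by `a(t) ~ e^{ht}` gives
`-a(t) η(t) → 1/h`.
-/

open Asymptotics MeasureTheory

theorem integral_exp_neg_mul {h : ℝ} (hh : h ≠ 0) (u v : ℝ) :
    ∫ s in u..v, exp (-h * s) = (exp (-h * u) - exp (-h * v)) / h := by
  rw [integral_comp_mul_left (fun x => exp x) (neg_ne_zero.mpr hh), integral_exp, smul_eq_mul,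
    inv_neg]
  ring

theorem tendsto_exp_neg_mul_div_atBot {h : ℝ} (hh : 0 < h) :
    Tendsto (fun t => exp (-h * t) / h) atBot atTop :=
  (tendsto_exp_atTop.comp
    (tendsto_id.const_mul_atBot_of_neg (neg_neg_of_pos hh))).atTop_div_const hh

theorem integral_exp_neg_mul_isEquivalent_atBot {h : ℝ} (hh : 0 < h) (b : ℝ) :
    (fun t => ∫ s in t..b, exp (-h * s)) ~[atBot] fun t => exp (-h * t) / h := by
  have hdiff : ((fun t => ∫ s in t..b, exp (-h * s)) - fun t => exp (-h * t) / h) =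
      fun _ => -(exp (-h * b) / h) := by
    funext t
    rw [Pi.sub_apply, integral_exp_neg_mul hh.ne']
    ring
  rw [IsEquivalent, hdiff, isLittleO_const_left]
  exact Or.inr (tendsto_norm_atTop_atTop.comp (tendsto_exp_neg_mul_div_atBot hh))

theorem integral_isLittleO_integral_atBot {f g : ℝ → ℝ} {b : ℝ}
    (hf : ∀ t ≤ b, IntervalIntegrable f volume t b)
    (hg : ∀ t ≤ b, IntervalIntegrable g volume t b)
    (hg_nonneg : ∀ᶠ s in atBot, 0 ≤ g s)
    (hg_top : Tendsto (fun t => ∫ s in t..b, g s) atBot atTop) (hfg : f =o[atBot] g) :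
    (fun t => ∫ s in t..b, f s) =o[atBot] fun t => ∫ s in t..b, g s := by
  refine IsLittleO.of_bound fun ε hε => ?_
  obtain ⟨T, hT⟩ := eventually_atBot.mp
    ((hfg.bound (half_pos hε)).and (hg_nonneg.and (eventually_le_atBot b)))
  have hTb : T ≤ b := (hT T le_rfl).2.2
  -- everything contributed by `[T, b]` is a constant, eventually dominated by `ε/2 ∫_t^b g`
  set C := ‖∫ s in T..b, f s‖ + ε / 2 * |∫ s in T..b, g s| with hC_def
  filter_upwards [eventually_le_atBot T,
    (hg_top.const_mul_atTop (half_pos hε)).eventually_ge_atTop C,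
    hg_top.eventually_ge_atTop 0] with t htT hC hpos
  have hsub : Set.uIcc t T ⊆ Set.uIcc t b :=
    Set.uIcc_subset_uIcc_left (Set.mem_uIcc_of_le htT hTb)
  have hg_tT := (hg t (htT.trans hTb)).mono_set hsub
  have head : ‖∫ s in t..T, f s‖ ≤ ε / 2 * ∫ s in t..T, g s := by
    rw [← intervalIntegral.integral_const_mul]
    refine norm_integral_le_of_norm_le htT (ae_of_all _ fun s hs => ?_) (hg_tT.const_mul _)
    obtain ⟨hfs, hgs, -⟩ := hT s hs.2
    rwa [Real.norm_of_nonneg hgs] at hfs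
  have hf_split : (∫ s in t..T, f s) + ∫ s in T..b, f s = ∫ s in t..b, f s :=
    integral_add_adjacent_intervals ((hf t (htT.trans hTb)).mono_set hsub) (hf T hTb)
  have hg_split : (∫ s in t..T, g s) + ∫ s in T..b, g s = ∫ s in t..b, g s :=
    integral_add_adjacent_intervals hg_tT (hg T hTb)
  rw [← hf_split, Real.norm_of_nonneg hpos]
  calc ‖(∫ s in t..T, f s) + ∫ s in T..b, f s‖
      ≤ ε / 2 * (∫ s in t..T, g s) + ‖∫ s in T..b, f s‖ :=
        (norm_add_le _ _).trans (add_le_add_left head _)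
    _ ≤ ε / 2 * (∫ s in t..b, g s) + C := by
        rw [← hg_split]
        have := mul_le_mul_of_nonneg_left (neg_abs_le (∫ s in T..b, g s)) (half_pos hε).le
        linarith
    _ ≤ ε * ∫ s in t..b, g s := by linarith

theorem integral_isEquivalent_integral_atBot {f g : ℝ → ℝ} {b : ℝ}
    (hf : ∀ t ≤ b, IntervalIntegrable f volume t b)
    (hg : ∀ t ≤ b, IntervalIntegrable g volume t b)
    (hg_nonneg : ∀ᶠ s in atBot, 0 ≤ g s)
    (hg_top : Tendsto (fun t => ∫ s in t..b, g s) atBot atTop) (hfg : f ~[atBot] g) :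
    (fun t => ∫ s in t..b, f s) ~[atBot] fun t => ∫ s in t..b, g s := by
  refine (integral_isLittleO_integral_atBot (fun t ht => (hf t ht).sub (hg t ht)) hg hg_nonneg
    hg_top hfg).congr' ?_ EventuallyEq.rfl
  filter_upwards [eventually_le_atBot b] with t ht
  exact integral_sub (hf t ht) (hg t ht)

/-- If `a(t) = e^{ht} + o(e^{ht})` as `t → -∞`, then the scale factor times the
conformal time `η(t) = -∫_t^{tL} ds/a(s)` satisfies `a·η → -1/h`. -/
theorem a_eta_limit_of_asymptotic_form
    (a : ℝ → ℝ) (tmax h tL : ℝ) (hh : 0 < h) (htL : tL < tmax)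
    (ha_cont : ContinuousOn a (Set.Iio tmax))
    (ha_pos : ∀ t ∈ Set.Iio tmax, 0 < a t)
    (ha_asym : Tendsto (fun t => (a t - Real.exp (h * t)) / Real.exp (h * t))
      atBot (nhds 0))
    (η : ℝ → ℝ) (hη : η = fun t => -(∫ s in t..tL, 1 / a s)) :
    Tendsto (fun t => a t * η t) atBot (nhds (-(1 / h))) := by
  have ha_equiv : a ~[atBot] fun t => exp (h * t) := by
    refine isEquivalent_of_tendsto_one
      ((zero_add (1 : ℝ) ▸ ha_asym.add_const 1).congr fun t => ?_)
    rw [Pi.div_apply, sub_div, div_self (exp_pos _).ne', sub_add_cancel]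
  have hinv_equiv : (fun t => 1 / a t) ~[atBot] fun t => exp (-h * t) := by
    refine (ha_equiv.inv.congr_left (.of_forall fun t => ?_)).congr_right (.of_forall fun t => ?_)
    · rw [Pi.inv_apply, one_div]
    · simp only [Pi.inv_apply, neg_mul, exp_neg]
  have hinv_int : ∀ t ≤ tL, IntervalIntegrable (fun s => 1 / a s) volume t tL := by
    intro t ht
    have hcont : ContinuousOn (fun s => 1 / a s) (Set.Iio tmax) :=
      continuousOn_const.div ha_cont fun s hs => (ha_pos s hs).ne'
    refine (hcont.mono ?_).intervalIntegrable
    rw [Set.uIcc_of_le ht]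
    exact fun s hs => hs.2.trans_lt htL
  have hexp_int : ∀ t ≤ tL, IntervalIntegrable (fun s => exp (-h * s)) volume t tL :=
    fun t _ => (by fun_prop : Continuous fun s => exp (-h * s)).intervalIntegrable t tL
  have hexp_equiv := integral_exp_neg_mul_isEquivalent_atBot hh tL
  have hη_equiv : (fun t => ∫ s in t..tL, 1 / a s) ~[atBot] fun t => exp (-h * t) / h :=
    (integral_isEquivalent_integral_atBot hinv_int hexp_int (.of_forall fun _ => (exp_pos _).le)
      (hexp_equiv.symm.tendsto_atTop (tendsto_exp_neg_mul_div_atBot hh)) hinv_equiv).trans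
      hexp_equiv
  have hprod : Tendsto (fun t => exp (h * t) * (exp (-h * t) / h)) atBot (nhds (1 / h)) :=
    tendsto_const_nhds.congr fun t => by
      rw [mul_div_assoc', ← exp_add, neg_mul, add_neg_cancel, exp_zero]
  subst hη
  simpa using ((ha_equiv.mul hη_equiv).symm.tendsto_nhds hprod).neg
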